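/- arXiv:2408.17286 — 7 statements merged into one kernel-verified Lean document; each statement's English description precedes it below -/
import Mathlib

section
/- Suppose the MDP is transient. Define the sequence w^{t,*} ∈ ℝ^S by w^{0,*} = −1 (the vector with all entries −1) and w^{t+1,*} = L* w^{t,*}. If there exists M ∈ ℝ such that (w^{t,*})_s ≥ M for all t ∈ ℕ and s ∈ S, then the limit w^{∞,*} := lim_{t→∞} w^{t,*} exists in ℝ^S, there exists a deterministic decision rule d* : S → A such that w^{∞,*} = B^{d*} w^{∞,*} − b^{d*}, and w^{∞,*} is the unique vector w ∈ ℝ^S satisfying w = B^{d*} w − b^{d*}. -/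
open Matrix Filter

/-- Spectral radius of a real square matrix: the maximum modulus of its complex eigenvalues. -/
noncomputable def specRad {S : Type*} [Fintype S] [DecidableEq S] (M : Matrix S S ℝ) : ℝ :=
  sSup ((fun z : ℂ => ‖z‖) '' spectrum ℂ (M.map Complex.ofReal))

/-- Exponential transition matrix `B^a` for action `a`. -/
noncomputable def Bmat {S A : Type*} (p r : S → A → Option S → ℝ) (β : ℝ) (a : A) :
    Matrix S S ℝ :=
  Matrix.of fun s s' => p s a (some s') * Real.exp (-β * r s a (some s'))

/-- Exponential termination vector `b^a` for action `a` (`none` is the sink state `e`). -/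
noncomputable def bvec {S A : Type*} (p r : S → A → Option S → ℝ) (β : ℝ) (a : A) : S → ℝ :=
  fun s => p s a none * Real.exp (-β * r s a none)

/-- Optimal exponential Bellman operator `L*`. -/
noncomputable def Lstar {S A : Type*} [Fintype S] [Fintype A] [Nonempty A]
    (p r : S → A → Option S → ℝ) (β : ℝ) (w : S → ℝ) : S → ℝ :=
  fun s => Finset.univ.sup' Finset.univ_nonempty
    (fun a : A => (Bmat p r β a *ᵥ w) s - bvec p r β a s)

/-- Transition matrix `P^d` (restricted to non-sink states) of a deterministic decision rule. -/
def Pmat {S A : Type*} (p : S → A → Option S → ℝ) (d : S → A) : Matrix S S ℝ :=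
  Matrix.of fun s s' => p s (d s) (some s')

/-- Exponential transition matrix `B^d` of a deterministic decision rule. -/
noncomputable def Bdet {S A : Type*} (p r : S → A → Option S → ℝ) (β : ℝ) (d : S → A) :
    Matrix S S ℝ :=
  Matrix.of fun s s' => Bmat p r β (d s) s s'

/-- Exponential termination vector `b^d` of a deterministic decision rule. -/
noncomputable def bdet {S A : Type*} (p r : S → A → Option S → ℝ) (β : ℝ) (d : S → A) :
    S → ℝ :=
  fun s => bvec p r β (d s) s

/-!
Starting from `0` instead of `-1`, the iterates of the monotone operator `L*` decrease (as
`b^a ≥ 0`); being bounded below they converge to a fixed point `w∞ ≤ 0`, and a maximizing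
decision rule `d*` turns it into a fixed point of the affine map `w ↦ B w - b` of `d*`. The
iterates from `-1` lie below those from `0` and above `w∞ + B^t (w⁰ - w∞)`, so both convergence
and uniqueness reduce to `B^t → 0`. Transience gives `P^t → 0` by Gelfand's formula, so from
every state the chain of `d*` reaches, along positive entries of `P` (equivalently of `B`), a
state that leaks into the sink. Along such a path `u = -w∞ = B u + b` strictly decreases under
some power of `B`; hence `B^N u ≤ θ u` for some `θ < 1` and a positive `u`, whence `B^t → 0`.
-/

open Matrix Filter Topology

theorem tendsto_norm_pow_of_spectralRadius_lt_one {A : Type*} [NormedRing A] [NormedAlgebra ℂ A]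
    [CompleteSpace A] {a : A} (ha : spectralRadius ℂ a < 1) :
    Tendsto (fun n => ‖a ^ n‖) atTop (𝓝 0) := by
  obtain ⟨q, hρq, hq1⟩ := ENNReal.lt_iff_exists_nnreal_btwn.mp ha
  have hq : (q : ℝ) < 1 := mod_cast hq1
  refine squeeze_zero' (Eventually.of_forall fun n => norm_nonneg _) ?_
    (tendsto_pow_atTop_nhds_zero_of_lt_one q.2 hq)
  filter_upwards [(spectrum.pow_nnnorm_pow_one_div_tendsto_nhds_spectralRadius a).eventually
    (gt_mem_nhds hρq), eventually_gt_atTop 0] with n hn hn0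
  rw [one_div, ENNReal.rpow_inv_lt_iff (by positivity), ENNReal.rpow_natCast] at hn
  exact_mod_cast hn.le

theorem tendsto_pow_of_specRad_lt_one {S : Type*} [Fintype S] [DecidableEq S] [Nonempty S]
    {P : Matrix S S ℝ} (hP : specRad P < 1) : Tendsto (P ^ ·) atTop (𝓝 0) := by
  let _ := Matrix.linftyOpNormedRing (n := S) (α := ℂ)
  let _ := Matrix.linftyOpNormedAlgebra (n := S) (R := ℂ) (α := ℂ)
  set PC := P.map Complex.ofReal
  have hρ : spectralRadius ℂ PC < 1 := by
    have hbdd : BddAbove ((fun z : ℂ => ‖z‖) '' spectrum ℂ PC) :=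
      ((spectrum.isCompact PC).image continuous_norm).isBounded.bddAbove
    refine spectrum.spectralRadius_lt_of_forall_lt (r := 1) PC fun z hz => ?_
    have : ‖z‖ < 1 := (le_csSup hbdd ⟨z, hz, rfl⟩).trans_lt hP
    exact_mod_cast this
  have hPC : Tendsto (PC ^ ·) atTop (𝓝 0) :=
    tendsto_zero_iff_norm_tendsto_zero.mpr (tendsto_norm_pow_of_spectralRadius_lt_one hρ)
  have hre : Continuous fun M : Matrix S S ℂ => M.map Complex.re :=
    continuous_id.matrix_map Complex.continuous_re
  convert (hre.tendsto 0).comp hPC using 1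
  · ext n : 1
    rw [Function.comp_apply, show PC = (Complex.ofRealHom : ℝ →+* ℂ).mapMatrix P from rfl,
      ← map_pow]
    ext i j
    simp
  · simp

section NonnegMatrix

variable {S : Type*} [Fintype S] {B : Matrix S S ℝ}

theorem mulVec_mono_of_nonneg (hB : ∀ i j, 0 ≤ B i j) : Monotone (B *ᵥ ·) :=
  fun _ _ h i => Finset.sum_le_sum fun j _ => mul_le_mul_of_nonneg_left (h j) (hB i j)

theorem mulVec_nonneg_of_nonneg (hB : ∀ i j, 0 ≤ B i j) {v : S → ℝ} (hv : 0 ≤ v) :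
    0 ≤ B *ᵥ v :=
  fun i => Finset.sum_nonneg fun j _ => mul_nonneg (hB i j) (hv j)

variable [DecidableEq S]

theorem tendsto_pow_mulVec (hB : Tendsto (B ^ ·) atTop (𝓝 0)) (v : S → ℝ) :
    Tendsto (fun n => B ^ n *ᵥ v) atTop (𝓝 0) := by
  have := ((continuous_id.matrix_mulVec (continuous_const (y := v))).tendsto 0).comp hB
  simpa [Function.comp_def] using this

theorem nonpos_of_le_mulVec (hB : ∀ i j, 0 ≤ B i j) (hBn : Tendsto (B ^ ·) atTop (𝓝 0))
    {v : S → ℝ} (hv : v ≤ B *ᵥ v) : v ≤ 0 := by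
  have hle : ∀ n, v ≤ B ^ n *ᵥ v := by
    intro n
    induction n with
    | zero => simp
    | succ n ih =>
      calc v ≤ B *ᵥ v := hv
        _ ≤ B *ᵥ (B ^ n *ᵥ v) := mulVec_mono_of_nonneg hB ih
        _ = B ^ (n + 1) *ᵥ v := by rw [mulVec_mulVec, pow_succ']
  exact ge_of_tendsto' (tendsto_pow_mulVec hBn v) hle

theorem eq_of_eq_mulVec_sub (hBn : Tendsto (B ^ ·) atTop (𝓝 0)) {b x y : S → ℝ}
    (hx : x = B *ᵥ x - b) (hy : y = B *ᵥ y - b) : y = x := by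
  have hδ : B *ᵥ (y - x) = y - x := by
    ext i
    have := congrFun hx i
    have := congrFun hy i
    simp only [mulVec_sub, Pi.sub_apply] at *
    linarith
  have hpow : ∀ n, B ^ n *ᵥ (y - x) = y - x := by
    intro n
    induction n with
    | zero => simp
    | succ n ih => rw [pow_succ', ← mulVec_mulVec, ih, hδ]
  have := tendsto_pow_mulVec hBn (y - x)
  simp only [hpow] at this
  exact sub_eq_zero.mp (tendsto_nhds_unique tendsto_const_nhds this)

theorem pow_mulVec_sub_le_iterate_sub (hB : ∀ i j, 0 ≤ B i j) {L : (S → ℝ) → S → ℝ}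
    {x : S → ℝ} (hL : ∀ v, B *ᵥ (v - x) ≤ L v - x) (v : S → ℝ) (n : ℕ) :
    B ^ n *ᵥ (v - x) ≤ L^[n] v - x := by
  induction n with
  | zero => simp
  | succ n ih =>
    calc B ^ (n + 1) *ᵥ (v - x) = B *ᵥ (B ^ n *ᵥ (v - x)) := by rw [mulVec_mulVec, pow_succ']
      _ ≤ B *ᵥ (L^[n] v - x) := mulVec_mono_of_nonneg hB ih
      _ ≤ L (L^[n] v) - x := hL _
      _ = L^[n + 1] v - x := by rw [Function.iterate_succ_apply']

theorem tendsto_iterate_of_mulVec_sub_le (hB : ∀ i j, 0 ≤ B i j)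
    (hBn : Tendsto (B ^ ·) atTop (𝓝 0)) {L : (S → ℝ) → S → ℝ} {x : S → ℝ}
    (hL : ∀ v, B *ᵥ (v - x) ≤ L v - x) {v : S → ℝ} {y : ℕ → S → ℝ}
    (hy : Tendsto y atTop (𝓝 x)) (hvy : ∀ t, L^[t] v ≤ y t) :
    Tendsto (fun t => L^[t] v) atTop (𝓝 x) := by
  have hlower : ∀ t, x + B ^ t *ᵥ (v - x) ≤ L^[t] v := fun t =>
    le_sub_iff_add_le'.mp (pow_mulVec_sub_le_iterate_sub hB hL v t)
  refine tendsto_pi_nhds.mpr fun s => tendsto_of_tendsto_of_tendsto_of_le_of_le ?_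
    (tendsto_pi_nhds.mp hy s) (fun t => hlower t s) (fun t => hvy t s)
  simpa using (tendsto_pi_nhds.mp (tendsto_pow_mulVec hBn (v - x)) s).const_add (x s)

theorem exists_pow_mulVec_pos_of_reflTransGen (hB : ∀ i j, 0 ≤ B i j) {b : S → ℝ} (hb : 0 ≤ b)
    {s g : S} (hsg : Relation.ReflTransGen (fun i j => 0 < B i j) s g) (hg : 0 < b g) :
    ∃ n, 0 < (B ^ n *ᵥ b) s := by
  induction hsg using Relation.ReflTransGen.head_induction_on with
  | refl => exact ⟨0, by simpa using hg⟩
  | @head s s' hss' _ ih =>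
    obtain ⟨n, hn⟩ := ih
    have hnonneg := mulVec_nonneg_of_nonneg (pow_apply_nonneg hB n) hb
    refine ⟨n + 1, ?_⟩
    rw [pow_succ', ← mulVec_mulVec]
    exact (mul_pos hss' hn).trans_le <| Finset.single_le_sum
      (f := fun k => B s k * (B ^ n *ᵥ b) k) (fun k _ => mul_nonneg (hB s k) (hnonneg k))
      (Finset.mem_univ s')

theorem exists_reflTransGen_pos_of_tendsto_pow {P : Matrix S S ℝ} (hP : ∀ i j, 0 ≤ P i j)
    (hPn : Tendsto (P ^ ·) atTop (𝓝 0)) {c : S → ℝ} (hc : ∀ i, ∑ j, P i j + c i = 1) (s : S) :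
    ∃ g, Relation.ReflTransGen (fun i j => 0 < P i j) s g ∧ 0 < c g := by
  classical
  by_contra! hleak
  set R := Relation.ReflTransGen (fun i j => 0 < P i j) s
  set χ : S → ℝ := fun t => if R t then 1 else 0
  have hχ0 : 0 ≤ χ := fun t => by by_cases ht : R t <;> simp [χ, ht]
  -- the reachable set is closed and does not leak, so its indicator is superinvariant
  have hχ : χ ≤ P *ᵥ χ := by
    intro i
    by_cases hi : R i
    · have hrow : (P *ᵥ χ) i = ∑ j, P i j := Finset.sum_congr rfl fun j _ => by
        rcases (hP i j).lt_or_eq with hij | hij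
        · have hj : R j := hi.tail hij
          simp [χ, hj]
        · simp [← hij]
      simp only [χ, hi, if_true, hrow]
      linarith [hc i, hleak i hi]
    · simpa [χ, hi] using mulVec_nonneg_of_nonneg hP hχ0 i
  have := nonpos_of_le_mulVec hP hPn hχ s
  norm_num [χ, show R s from .refl] at this

theorem tendsto_pow_of_pow_mulVec_lt [Nonempty S] (hB : ∀ i j, 0 ≤ B i j) {u : S → ℝ}
    (hu : ∀ i, 0 < u i) (hBu : B *ᵥ u ≤ u) {N : ℕ} (hN : ∀ i, (B ^ N *ᵥ u) i < u i) :
    Tendsto (B ^ ·) atTop (𝓝 0) := by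
  have hN0 : N ≠ 0 := by
    rintro rfl
    simpa using hN (Classical.arbitrary S)
  obtain ⟨θ, hθ0, hθ1, hθ⟩ : ∃ θ : ℝ, 0 ≤ θ ∧ θ < 1 ∧ B ^ N *ᵥ u ≤ θ • u := by
    set f := fun i => (B ^ N *ᵥ u) i / u i
    refine ⟨Finset.univ.sup' Finset.univ_nonempty f, ?_, ?_, fun i => ?_⟩
    · have i := Classical.arbitrary S
      refine le_trans ?_ (Finset.le_sup' f (Finset.mem_univ i))
      exact div_nonneg (mulVec_nonneg_of_nonneg (pow_apply_nonneg hB N) (fun j => (hu j).le) i)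
        (hu i).le
    · exact (Finset.sup'_lt_iff _).mpr fun i _ => (div_lt_one (hu i)).mpr (hN i)
    · have := Finset.le_sup' f (Finset.mem_univ i)
      rw [div_le_iff₀ (hu i)] at this
      simpa using this
  have hanti : Antitone (fun n => B ^ n *ᵥ u) := antitone_nat_of_succ_le fun n => by
    rw [pow_succ, ← mulVec_mulVec]
    exact mulVec_mono_of_nonneg (pow_apply_nonneg hB n) hBu
  have hgeom : ∀ k, B ^ (N * k) *ᵥ u ≤ θ ^ k • u := by
    intro k
    induction k with
    | zero => simp
    | succ k ih =>
      calc B ^ (N * (k + 1)) *ᵥ u = B ^ (N * k) *ᵥ (B ^ N *ᵥ u) := by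
            rw [mulVec_mulVec, ← pow_add, mul_add_one]
        _ ≤ B ^ (N * k) *ᵥ (θ • u) := mulVec_mono_of_nonneg (pow_apply_nonneg hB _) hθ
        _ = θ • (B ^ (N * k) *ᵥ u) := mulVec_smul _ _ _
        _ ≤ θ • θ ^ k • u := smul_le_smul_of_nonneg_left ih hθ0
        _ = θ ^ (k + 1) • u := by rw [smul_smul, pow_succ']
  refine tendsto_pi_nhds.mpr fun i => tendsto_pi_nhds.mpr fun j => ?_
  have hbound : ∀ n, (B ^ n) i j ≤ θ ^ (n / N) * u i / u j := by
    intro n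
    rw [le_div_iff₀ (hu j)]
    calc (B ^ n) i j * u j ≤ (B ^ n *ᵥ u) i :=
          Finset.single_le_sum (f := fun k => (B ^ n) i k * u k)
            (fun k _ => mul_nonneg (pow_apply_nonneg hB n i k) (hu k).le) (Finset.mem_univ j)
      _ ≤ (B ^ (N * (n / N)) *ᵥ u) i := hanti (Nat.mul_div_le n N) i
      _ ≤ θ ^ (n / N) * u i := hgeom _ i
  refine squeeze_zero (fun n => pow_apply_nonneg hB n i j) hbound ?_
  simpa using (((tendsto_pow_atTop_nhds_zero_of_lt_one hθ0 hθ1).comp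
    (Nat.tendsto_div_const_atTop hN0)).mul_const (u i)).div_const (u j)

theorem tendsto_pow_of_eq_mulVec_add [Nonempty S] (hB : ∀ i j, 0 ≤ B i j) {b u : S → ℝ}
    (hb : 0 ≤ b) (hu : 0 ≤ u) (hub : u = B *ᵥ u + b) (hreach : ∀ i, ∃ n, 0 < (B ^ n *ᵥ b) i) :
    Tendsto (B ^ ·) atTop (𝓝 0) := by
  have htelescope : ∀ n, u = B ^ n *ᵥ u + ∑ k ∈ Finset.range n, B ^ k *ᵥ b := by
    intro n
    induction n with
    | zero => simp
    | succ n ih =>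
      have hstep : B ^ n *ᵥ u = B ^ (n + 1) *ᵥ u + B ^ n *ᵥ b := by
        conv_lhs => rw [hub]
        rw [mulVec_add, mulVec_mulVec, ← pow_succ]
      conv_lhs => rw [ih, hstep]
      rw [Finset.sum_range_succ]
      abel
  choose n hn using hreach
  set N := Finset.univ.sup n + 1
  have hgap : ∀ i, 0 < (∑ k ∈ Finset.range N, B ^ k *ᵥ b) i := by
    intro i
    rw [Finset.sum_apply]
    exact (hn i).trans_le <| Finset.single_le_sum (f := fun k => (B ^ k *ᵥ b) i)
      (fun k _ => mulVec_nonneg_of_nonneg (pow_apply_nonneg hB k) hb i)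
      (Finset.mem_range.mpr (Nat.lt_succ_of_le (Finset.le_sup (Finset.mem_univ i))))
  have hN : ∀ i, (B ^ N *ᵥ u) i < u i := fun i => by
    have := congrFun (htelescope N) i
    simp only [Pi.add_apply] at this
    linarith [hgap i]
  refine tendsto_pow_of_pow_mulVec_lt hB (fun i => ?_) (fun i => ?_) hN
  · exact (mulVec_nonneg_of_nonneg (pow_apply_nonneg hB N) hu i).trans_lt (hN i)
  · have := congrFun hub i
    simp only [Pi.add_apply] at this
    linarith [show (0 : ℝ) ≤ b i from hb i]

end NonnegMatrix

section MDP

variable {S A : Type*} {p r : S → A → Option S → ℝ} {β : ℝ}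

theorem Bmat_nonneg (hp : ∀ s a s', 0 ≤ p s a s') (a : A) (s s' : S) :
    0 ≤ Bmat p r β a s s' :=
  mul_nonneg (hp _ _ _) (Real.exp_pos _).le

theorem bvec_nonneg (hp : ∀ s a s', 0 ≤ p s a s') (a : A) : 0 ≤ bvec p r β a :=
  fun _ => mul_nonneg (hp _ _ _) (Real.exp_pos _).le

variable [Fintype S]

theorem tendsto_pow_Bdet [DecidableEq S] [Nonempty S] (hp : ∀ s a s', 0 ≤ p s a s')
    (hp_sum : ∀ s a, ∑ s' : Option S, p s a s' = 1) {d : S → A}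
    (htransient : specRad (Pmat p d) < 1) {x : S → ℝ} (hx : x ≤ 0)
    (hfix : x = Bdet p r β d *ᵥ x - bdet p r β d) :
    Tendsto (Bdet p r β d ^ ·) atTop (𝓝 0) := by
  have hB : ∀ i j, 0 ≤ Bdet p r β d i j := fun i => Bmat_nonneg hp (d i) i
  have hb : 0 ≤ bdet p r β d := fun i => bvec_nonneg hp (d i) i
  have hleak := exists_reflTransGen_pos_of_tendsto_pow (fun i j => hp i (d i) (some j))
    (tendsto_pow_of_specRad_lt_one htransient)
    (fun i => by rw [← hp_sum i (d i), Fintype.sum_option, add_comm])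
  refine tendsto_pow_of_eq_mulVec_add hB hb (u := -x) (neg_nonneg.mpr hx) ?_ fun s => ?_
  · conv_lhs => rw [hfix]
    rw [mulVec_neg]
    abel
  · obtain ⟨g, hsg, hg⟩ := hleak s
    -- `B^d` and `b^d` have the same sign pattern as `P^d` and the leak probabilities
    exact exists_pow_mulVec_pos_of_reflTransGen hB hb
      (Relation.ReflTransGen.mono (fun i j (hij : 0 < Pmat p d i j) =>
        (mul_pos hij (Real.exp_pos _) : 0 < Bdet p r β d i j)) s g hsg)
      (mul_pos hg (Real.exp_pos _))

variable [Fintype A] [Nonempty A]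

theorem Lstar_mono (hp : ∀ s a s', 0 ≤ p s a s') : Monotone (Lstar p r β) :=
  fun _ _ h s => Finset.sup'_mono_fun fun a _ =>
    sub_le_sub_right (mulVec_mono_of_nonneg (Bmat_nonneg hp a) h s) _

theorem Lstar_zero_le (hp : ∀ s a s', 0 ≤ p s a s') : Lstar p r β 0 ≤ 0 :=
  fun s => Finset.sup'_le _ _ fun a _ => by simpa using bvec_nonneg hp a s

theorem continuous_Lstar : Continuous (Lstar p r β) := by
  unfold Lstar
  fun_prop

theorem Bdet_mulVec_sub_le_Lstar (d : S → A) (v : S → ℝ) :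
    Bdet p r β d *ᵥ v - bdet p r β d ≤ Lstar p r β v :=
  fun s => Finset.le_sup' (fun a => (Bmat p r β a *ᵥ v) s - bvec p r β a s) (Finset.mem_univ (d s))

theorem Bdet_mulVec_sub_le_Lstar_sub {d : S → A} {x : S → ℝ}
    (hfix : x = Bdet p r β d *ᵥ x - bdet p r β d) (v : S → ℝ) :
    Bdet p r β d *ᵥ (v - x) ≤ Lstar p r β v - x := by
  intro s
  have h1 : (Bdet p r β d *ᵥ v - bdet p r β d) s ≤ Lstar p r β v s :=
    Bdet_mulVec_sub_le_Lstar d v s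
  have h2 := congrFun hfix s
  simp only [mulVec_sub, Pi.sub_apply] at *
  linarith

theorem exists_Bdet_mulVec_sub_eq_Lstar (v : S → ℝ) :
    ∃ d : S → A, Bdet p r β d *ᵥ v - bdet p r β d = Lstar p r β v := by
  choose d _ hd using fun s => Finset.exists_mem_eq_sup' Finset.univ_nonempty
    (fun a => (Bmat p r β a *ᵥ v) s - bvec p r β a s)
  exact ⟨d, funext fun s => (hd s).symm⟩

end MDP

theorem stmt0_general
    {S A : Type*} [Fintype S] [DecidableEq S] [Nonempty S] [Fintype A] [Nonempty A]
    (p r : S → A → Option S → ℝ) (β : ℝ)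
    (hp_nonneg : ∀ s a s', 0 ≤ p s a s')
    (hp_sum : ∀ s a, ∑ s' : Option S, p s a s' = 1)
    (htransient : ∀ d : S → A, specRad (Pmat p d) < 1)
    (w : ℕ → S → ℝ)
    (hw0 : w 0 = fun _ => -1)
    (hwsucc : ∀ t, w (t + 1) = Lstar p r β (w t))
    (M : ℝ) (hM : ∀ t s, M ≤ w t s) :
    ∃ winf : S → ℝ,
      Filter.Tendsto w Filter.atTop (nhds winf) ∧
      ∃ dstar : S → A,
        winf = Bdet p r β dstar *ᵥ winf - bdet p r β dstar ∧
        ∀ w' : S → ℝ, w' = Bdet p r β dstar *ᵥ w' - bdet p r β dstar → w' = winf := by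
  set L := Lstar p r β
  have hw : ∀ t, w t = L^[t] (w 0) := fun t => by
    induction t with
    | zero => rfl
    | succ t ih => rw [hwsucc, ih, Function.iterate_succ_apply']
  have hwy : ∀ t, L^[t] (w 0) ≤ L^[t] 0 := fun t =>
    (Lstar_mono hp_nonneg).iterate t (by rw [hw0]; intro s; norm_num)
  have hy_bdd : BddBelow (Set.range fun t => L^[t] 0) := ⟨fun _ => M, by
    rintro _ ⟨t, rfl⟩ s
    exact ((hM t s).trans_eq (congrFun (hw t) s)).trans (hwy t s)⟩
  have hy_lim : Tendsto (fun t => L^[t] 0) atTop (𝓝 (⨅ t, L^[t] 0)) :=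
    tendsto_atTop_ciInf ((Lstar_mono hp_nonneg).antitone_iterate_of_map_le
      (Lstar_zero_le hp_nonneg)) hy_bdd
  set winf := ⨅ t, L^[t] 0
  obtain ⟨d, hd⟩ := exists_Bdet_mulVec_sub_eq_Lstar (p := p) (r := r) (β := β) winf
  have hfix : winf = Bdet p r β d *ᵥ winf - bdet p r β d :=
    (hd.trans (isFixedPt_of_tendsto_iterate hy_lim continuous_Lstar.continuousAt)).symm
  have hBn := tendsto_pow_Bdet hp_nonneg hp_sum (htransient d) (ciInf_le hy_bdd 0) hfix
  refine ⟨winf, ?_, d, hfix, fun w' hw' => eq_of_eq_mulVec_sub hBn hfix hw'⟩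
  rw [show w = fun t => L^[t] (w 0) from funext hw]
  exact tendsto_iterate_of_mulVec_sub_le (fun i => Bmat_nonneg hp_nonneg (d i) i) hBn
    (Bdet_mulVec_sub_le_Lstar_sub hfix) hy_lim hwy

theorem stmt0
    {S A : Type*} [Fintype S] [DecidableEq S] [Nonempty S] [Fintype A] [Nonempty A]
    (p r : S → A → Option S → ℝ) (β : ℝ) (hβ : 0 < β)
    (hp_nonneg : ∀ s a s', 0 ≤ p s a s')
    (hp_sum : ∀ s a, ∑ s' : Option S, p s a s' = 1)
    (htransient : ∀ d : S → A, specRad (Pmat p d) < 1)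
    (w : ℕ → S → ℝ)
    (hw0 : w 0 = fun _ => -1)
    (hwsucc : ∀ t, w (t + 1) = Lstar p r β (w t))
    (M : ℝ) (hM : ∀ t s, M ≤ w t s) :
    ∃ winf : S → ℝ,
      Filter.Tendsto w Filter.atTop (nhds winf) ∧
      ∃ dstar : S → A,
        winf = Bdet p r β dstar *ᵥ winf - bdet p r β dstar ∧
        ∀ w' : S → ℝ, w' = Bdet p r β dstar *ᵥ w' - bdet p r β dstar → w' = winf :=
  stmt0_general p r β hp_nonneg hp_sum htransient w hw0 hwsucc M hM
end

section
/- Fix a horizon t ≥ 1. For a Markov policy π = (d₀,…,d_{t−1}) of randomized decision rules, define w^0(·) = −1 and, recursively, w^k(d₀,…,d_{k−1}) = B^{d₀} · w^{k−1}(d₁,…,d_{k−1}) − b^{d₀} for 1 ≤ k ≤ t. Define w^{0,*} = −1 and w^{k,*} = L* w^{k−1,*}. Then: (i) for every Markov policy π of randomized decision rules of length t, w^t(π) ≤ w^{t,*} entrywise; and (ii) there exists a Markov policy π* = (d₀*,…,d_{t−1}*) of deterministic decision rules (each d_k* : S → A, viewed as a randomized rule placing probability 1 on d_k*(s)) such that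 w^t(π*) = w^{t,*}. -/
open Matrix Filter

/-- Exponential transition matrix `B^d` of a randomized decision rule `d : S → Δ(A)`. -/
noncomputable def Brand {S A : Type*} [Fintype A] (p r : S → A → Option S → ℝ) (β : ℝ)
    (d : S → A → ℝ) : Matrix S S ℝ :=
  Matrix.of fun s s' => ∑ a : A, d s a * (p s a (some s') * Real.exp (-β * r s a (some s')))

/-- Exponential termination vector `b^d` of a randomized decision rule `d : S → Δ(A)`. -/
noncomputable def brand {S A : Type*} [Fintype A] (p r : S → A → Option S → ℝ) (β : ℝ)
    (d : S → A → ℝ) : S → ℝ :=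
  fun s => ∑ a : A, d s a * (p s a none * Real.exp (-β * r s a none))

/-- Finite-horizon exponential value function of a Markov policy `π = (d₀, d₁, …)`:
`w^0 = -1` and `w^t(d₀,…,d_{t-1}) = B^{d₀} w^{t-1}(d₁,…,d_{t-1}) - b^{d₀}`. -/
noncomputable def wpol {S A : Type*} [Fintype S] [Fintype A]
    (p r : S → A → Option S → ℝ) (β : ℝ) : ℕ → (ℕ → S → A → ℝ) → S → ℝ
  | 0, _ => fun _ => -1
  | t + 1, π => Brand p r β (π 0) *ᵥ wpol p r β t (fun k => π (k + 1)) - brand p r β (π 0)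


lemma rand_decomp {S A : Type*} [Fintype S] [Fintype A]
    (p r : S → A → Option S → ℝ) (β : ℝ) (d : S → A → ℝ) (w : S → ℝ) (s : S) :
    (Brand p r β d *ᵥ w) s - brand p r β d s
      = ∑ a : A, d s a * ((Bmat p r β a *ᵥ w) s - bvec p r β a s) := by
  have h1 : (Brand p r β d *ᵥ w) s = ∑ a : A, d s a * (Bmat p r β a *ᵥ w) s := by
    simp only [Brand, Bmat, Matrix.mulVec, dotProduct, Matrix.of_apply, Finset.sum_mul]
    rw [Finset.sum_comm]
    simp [Finset.mul_sum, mul_assoc]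
  rw [h1]
  simp only [brand, bvec, mul_sub, Finset.sum_sub_distrib]

lemma sum_weight_le_sup' {A : Type*} [Fintype A] [Nonempty A] (d f : A → ℝ)
    (hd : ∀ a, 0 ≤ d a) (hsum : ∑ a, d a = 1) :
    ∑ a, d a * f a ≤ Finset.univ.sup' Finset.univ_nonempty f := by
  calc ∑ a, d a * f a ≤ ∑ a, d a * Finset.univ.sup' Finset.univ_nonempty f :=
        Finset.sum_le_sum fun a _ =>
          mul_le_mul_of_nonneg_left (Finset.le_sup' f (Finset.mem_univ a)) (hd a)
    _ = _ := by rw [← Finset.sum_mul, hsum, one_mul]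

theorem stmt1
    {S A : Type*} [Fintype S] [Nonempty S] [Fintype A] [Nonempty A] [DecidableEq A]
    (p r : S → A → Option S → ℝ) (β : ℝ) (hβ : 0 < β)
    (hp_nonneg : ∀ s a s', 0 ≤ p s a s')
    (hp_sum : ∀ s a, ∑ s' : Option S, p s a s' = 1)
    (t : ℕ) (ht : 1 ≤ t)
    (wstar : ℕ → S → ℝ)
    (hws0 : wstar 0 = fun _ => -1)
    (hwssucc : ∀ k, wstar (k + 1) = Lstar p r β (wstar k)) :
    (∀ π : ℕ → S → A → ℝ,
        (∀ k, k < t → ∀ s a, 0 ≤ π k s a) →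
        (∀ k, k < t → ∀ s, ∑ a : A, π k s a = 1) →
        ∀ s, wpol p r β t π s ≤ wstar t s) ∧
    (∃ dstar : ℕ → S → A,
        wpol p r β t (fun k s a => if a = dstar k s then 1 else 0) = wstar t) := by
  have key : ∀ n : ℕ,
      (∀ π : ℕ → S → A → ℝ,
          (∀ k, k < n → ∀ s a, 0 ≤ π k s a) →
          (∀ k, k < n → ∀ s, ∑ a : A, π k s a = 1) →
          ∀ s, wpol p r β n π s ≤ wstar n s) ∧
      (∃ dstar : ℕ → S → A,
          wpol p r β n (fun k s a => if a = dstar k s then 1 else 0) = wstar n) := by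
    intro n
    induction n with
    | zero =>
      refine ⟨fun π _ _ s => ?_, ⟨fun _ _ => Classical.arbitrary A, ?_⟩⟩
      · simp [wpol, hws0]
      · funext s; simp [wpol, hws0]
    | succ n ih =>
      constructor
      · intro π hpos hsum s
        rw [hwssucc]
        have hIH := ih.1 (fun k => π (k + 1))
          (fun k hk => hpos (k + 1) (by omega)) (fun k hk => hsum (k + 1) (by omega))
        have hmono : (Brand p r β (π 0) *ᵥ wpol p r β n (fun k => π (k + 1))) s
            ≤ (Brand p r β (π 0) *ᵥ wstar n) s := by
          apply Finset.sum_le_sum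
          intro s' _
          apply mul_le_mul_of_nonneg_left (hIH s')
          apply Finset.sum_nonneg
          intro a _
          exact mul_nonneg (hpos 0 (by omega) s a)
            (mul_nonneg (hp_nonneg s a _) (Real.exp_nonneg _))
        have h1 : wpol p r β (n + 1) π s
            ≤ (Brand p r β (π 0) *ᵥ wstar n) s - brand p r β (π 0) s := by
          simpa [wpol] using sub_le_sub_right hmono (brand p r β (π 0) s)
        refine h1.trans ?_
        rw [rand_decomp]
        exact sum_weight_le_sup' (π 0 s) _ (fun a => hpos 0 (by omega) s a)
          (hsum 0 (by omega) s)
      · obtain ⟨dstar, hds⟩ := ih.2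
        choose d0 hmem hd0 using fun s =>
          Finset.exists_mem_eq_sup' (Finset.univ_nonempty (α := A))
            (fun a => (Bmat p r β a *ᵥ wstar n) s - bvec p r β a s)
        refine ⟨fun k => Nat.rec d0 (fun m _ => dstar m) k, ?_⟩
        funext s
        have hshift :
            (fun k s a => if a = (Nat.rec d0 (fun m _ => dstar m) (k + 1) : S → A) s
              then (1:ℝ) else 0)
              = fun k s a => if a = dstar k s then (1:ℝ) else 0 := rfl
        show (Brand p r β _ *ᵥ wpol p r β n _ - brand p r β _) s = _
        rw [show (fun k => (fun k s a =>
              if a = (Nat.rec d0 (fun m _ => dstar m) k : S → A) s then (1:ℝ) else 0) (k + 1))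
            = fun k s a => if a = dstar k s then (1:ℝ) else 0 from rfl, hds]
        have : (Brand p r β (fun s a => if a = d0 s then (1:ℝ) else 0) *ᵥ wstar n) s
            - brand p r β (fun s a => if a = d0 s then (1:ℝ) else 0) s
            = (Bmat p r β (d0 s) *ᵥ wstar n) s - bvec p r β (d0 s) s := by
          rw [rand_decomp]
          simp [ite_mul]
        exact this.trans (by rw [hwssucc]; exact (hd0 s).symm)
  exact ⟨(key t).1, (key t).2⟩
end

section
/- Assume additionally ρ(P) < 1. Then there exists f ∈ ℝ^S with f ≥ 0, f ≠ 0, fᵀ B = ρ(B)·fᵀ (f is a nonnegative left eigenvector of B for the eigenvalue ρ(B)), and fᵀ b > 0. -/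
/-!
Weak Perron–Frobenius through the resolvent. For `t > ρ = ρ(B)` the Neumann series
`N = ∑ (t⁻¹ B)ⁿ` is entrywise nonnegative with `N (1 - t⁻¹ B) = 1`, and because `‖Bⁿ‖ ≥ ρⁿ` its
entry sum is at least `t / (t - ρ)`. Normalising the column sums of `N` therefore gives a point `f`
of the standard simplex with `‖f (ρ - B)‖ ≤ t - ρ`; letting `t → ρ` inside the compact simplex
produces a nonnegative left eigenvector for `ρ(B)`.

Since `b ≥ c_l p` it remains to see `f ⬝ p > 0`. Otherwise `p` vanishes on the support `T` of `f`,
and `f B = ρ(B) f` together with `B ≥ c_l P` shows that `P` has no entry from `T` to its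
complement. Then `P` is stochastic on `T`, so the indicator `v` of `T` satisfies `v ≤ P v ≤ Pⁿ v`,
which contradicts `Pⁿ → 0` (a consequence of `ρ(P) < 1` and Gelfand's formula).
-/

open Matrix Filter

open Topology

attribute [local instance] Matrix.linftyOpNormedAddCommGroup Matrix.linftyOpNormedSpace
  Matrix.linftyOpNormedRing Matrix.linftyOpNormedAlgebra

namespace Matrix

variable {S : Type*} [Fintype S]

lemma norm_map_ofReal (M : Matrix S S ℝ) : ‖M.map Complex.ofReal‖ = ‖M‖ := by
  simp [linfty_opNorm_def]

lemma norm_le_sum_sum_of_nonneg {A : Matrix S S ℝ} (hA : ∀ i j, 0 ≤ A i j) :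
    ‖A‖ ≤ ∑ i, ∑ j, A i j := by
  have h : ‖A‖₊ ≤ ∑ i, ∑ j, ‖A i j‖₊ := by
    rw [linfty_opNNNorm_def]
    exact Finset.sup_le fun i _ =>
      Finset.single_le_sum (f := fun i => ∑ j, ‖A i j‖₊) (fun _ _ => zero_le) (Finset.mem_univ i)
  calc ‖A‖ ≤ ∑ i, ∑ j, ‖A i j‖ := by simpa [← coe_nnnorm] using NNReal.coe_le_coe.mpr h
    _ = ∑ i, ∑ j, A i j := by simp only [Real.norm_of_nonneg (hA _ _)]

lemma apply_eq_zero_of_vecMul_eq_smul {B : Matrix S S ℝ} (hB : ∀ i j, 0 ≤ B i j) {f : S → ℝ}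
    (hf : ∀ i, 0 ≤ f i) {c : ℝ} (hfB : f ᵥ* B = c • f) {i j : S} (hi : 0 < f i) (hj : f j = 0) :
    B i j = 0 := by
  have hsum : ∑ k, f k * B k j = 0 := by simpa [vecMul, dotProduct, hj] using congrFun hfB j
  have := (Finset.sum_eq_zero_iff_of_nonneg fun k _ => mul_nonneg (hf k) (hB k j)).1 hsum i
    (Finset.mem_univ i)
  exact (mul_eq_zero.1 this).resolve_left hi.ne'

variable [DecidableEq S]

lemma norm_le_specRad (M : Matrix S S ℝ) {z : ℂ} (hz : z ∈ spectrum ℂ (M.map Complex.ofReal)) :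
    ‖z‖ ≤ specRad M :=
  le_csSup (((spectrum.isCompact _).image (continuous_norm (E := ℂ))).bddAbove) ⟨z, hz, rfl⟩

lemma exists_norm_eq_specRad [Nonempty S] (M : Matrix S S ℝ) :
    ∃ z ∈ spectrum ℂ (M.map Complex.ofReal), ‖z‖ = specRad M :=
  ((spectrum.isCompact _).image (continuous_norm (E := ℂ))).sSup_mem
    ((spectrum.nonempty _).image _)

lemma specRad_nonneg (M : Matrix S S ℝ) : 0 ≤ specRad M :=
  Real.sSup_nonneg fun _ ⟨z, _, hz⟩ => hz ▸ norm_nonneg z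

lemma spectralRadius_map_ofReal_le (M : Matrix S S ℝ) :
    spectralRadius ℂ (M.map Complex.ofReal) ≤ ENNReal.ofReal (specRad M) := by
  refine iSup₂_le fun z hz => ?_
  rw [← enorm_eq_nnnorm, ← ofReal_norm]
  exact ENNReal.ofReal_le_ofReal (norm_le_specRad M hz)

lemma map_ofReal_pow (M : Matrix S S ℝ) (n : ℕ) :
    M.map Complex.ofReal ^ n = (M ^ n).map Complex.ofReal :=
  (M.map_pow Complex.ofRealHom n).symm

lemma specRad_pow_le_norm_pow [Nonempty S] (M : Matrix S S ℝ) (n : ℕ) :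
    specRad M ^ n ≤ ‖M ^ n‖ := by
  obtain ⟨z, hz, hzM⟩ := exists_norm_eq_specRad M
  rw [← hzM, ← norm_pow, ← norm_map_ofReal, ← map_ofReal_pow]
  exact spectrum.norm_le_norm_of_mem (spectrum.pow_mem_pow _ n hz)

lemma eventually_norm_pow_le (M : Matrix S S ℝ) {r : ℝ} (hr : specRad M < r) :
    ∀ᶠ n : ℕ in atTop, ‖M ^ n‖ ≤ r ^ n := by
  have hr0 : 0 ≤ r := (specRad_nonneg M).trans hr.le
  have hlt : spectralRadius ℂ (M.map Complex.ofReal) < ENNReal.ofReal r :=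
    (spectralRadius_map_ofReal_le M).trans_lt ((ENNReal.ofReal_lt_ofReal_iff_of_nonneg
      (specRad_nonneg M)).2 hr)
  have hgelfand := spectrum.pow_norm_pow_one_div_tendsto_nhds_spectralRadius (M.map Complex.ofReal)
  filter_upwards [hgelfand.eventually_lt_const hlt, eventually_gt_atTop 0] with n hn hn0
  rw [ENNReal.ofReal_lt_ofReal_iff_of_nonneg (by positivity), one_div,
    Real.rpow_inv_lt_iff_of_pos (norm_nonneg _) hr0 (by positivity), Real.rpow_natCast,
    map_ofReal_pow, norm_map_ofReal] at hn
  exact hn.le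

lemma tendsto_pow_atTop_nhds_zero_of_specRad_lt_one {M : Matrix S S ℝ} (hM : specRad M < 1) :
    Tendsto (M ^ ·) atTop (𝓝 0) := by
  obtain ⟨r, hMr, hr1⟩ := exists_between hM
  refine squeeze_zero_norm' (eventually_norm_pow_le M hMr) ?_
  exact tendsto_pow_atTop_nhds_zero_of_lt_one ((specRad_nonneg M).trans hMr.le) hr1

lemma inv_one_sub_le_sum_sum_tsum_pow {A : Matrix S S ℝ} (hA : ∀ i j, 0 ≤ A i j)
    (hsum : Summable (A ^ ·)) {c : ℝ} (hc0 : 0 ≤ c) (hc1 : c < 1) (hcA : ∀ n, c ^ n ≤ ‖A ^ n‖) :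
    (1 - c)⁻¹ ≤ ∑ i, ∑ j, (∑' n, A ^ n) i j := by
  have hentry : ∀ i j, HasSum (fun n => (A ^ n) i j) ((∑' n, A ^ n) i j) := fun i j =>
    Pi.hasSum.mp (Pi.hasSum.mp hsum.hasSum i) j
  refine hasSum_le (fun n => (hcA n).trans (norm_le_sum_sum_of_nonneg (pow_apply_nonneg hA n)))
    (hasSum_geometric_of_lt_one hc0 hc1) (hasSum_sum fun i _ => hasSum_sum fun j _ => hentry i j)

lemma norm_pow_inv_smul (B : Matrix S S ℝ) {t : ℝ} (ht : 0 < t) (n : ℕ) :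
    ‖(t⁻¹ • B) ^ n‖ = ‖B ^ n‖ / t ^ n := by
  rw [smul_pow, norm_smul, norm_pow, norm_inv, Real.norm_of_nonneg ht.le, inv_pow, inv_mul_eq_div]

lemma summable_pow_inv_smul {B : Matrix S S ℝ} {t : ℝ} (ht : specRad B < t) :
    Summable fun n => (t⁻¹ • B) ^ n := by
  obtain ⟨r, hBr, hrt⟩ := exists_between ht
  have ht0 : 0 < t := (specRad_nonneg B).trans_lt ht
  refine .of_norm_bounded_eventually_nat (summable_geometric_of_lt_one
    (div_nonneg ((specRad_nonneg B).trans hBr.le) ht0.le) ((div_lt_one ht0).2 hrt)) ?_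
  filter_upwards [eventually_norm_pow_le B hBr] with n hn
  rw [norm_pow_inv_smul B ht0, div_pow]
  exact div_le_div_of_nonneg_right hn (by positivity)

lemma div_sub_specRad_le_sum_sum_tsum [Nonempty S] {B : Matrix S S ℝ} (hB : ∀ i j, 0 ≤ B i j)
    {t : ℝ} (ht : specRad B < t) :
    t / (t - specRad B) ≤ ∑ i, ∑ j, (∑' n, (t⁻¹ • B) ^ n) i j := by
  have ht0 : 0 < t := (specRad_nonneg B).trans_lt ht
  have := inv_one_sub_le_sum_sum_tsum_pow (A := t⁻¹ • B)
    (fun i j => mul_nonneg (inv_nonneg.2 ht0.le) (hB i j))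
    (summable_pow_inv_smul ht) (div_nonneg (specRad_nonneg B) ht0.le) ((div_lt_one ht0).2 ht)
    fun n => by
      rw [norm_pow_inv_smul B ht0, div_pow]
      exact div_le_div_of_nonneg_right (specRad_pow_le_norm_pow B n) (by positivity)
  rwa [one_sub_div ht0.ne', inv_div] at this

lemma exists_mem_stdSimplex_norm_vecMul_sub_le [Nonempty S] {B : Matrix S S ℝ}
    (hB : ∀ i j, 0 ≤ B i j) {t : ℝ} (ht : specRad B < t) :
    ∃ f ∈ stdSimplex ℝ S, ‖f ᵥ* (specRad B • 1 - B)‖ ≤ t - specRad B := by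
  set ρ := specRad B
  have ht0 : 0 < t := (specRad_nonneg B).trans_lt ht
  have hx : ∀ i j, 0 ≤ (t⁻¹ • B) i j := fun i j => mul_nonneg (inv_nonneg.2 ht0.le) (hB i j)
  have hsum := summable_pow_inv_smul ht
  set N := ∑' n, (t⁻¹ • B) ^ n
  have hN : N * (1 - t⁻¹ • B) = 1 := hsum.tsum_pow_mul_one_sub
  have hNnn : ∀ i j, 0 ≤ N i j := fun i j =>
    (Pi.hasSum.mp (Pi.hasSum.mp hsum.hasSum i) j).nonneg fun n => pow_apply_nonneg hx n i j
  set s := ∑ i, ∑ j, N i j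
  have hs : t / (t - ρ) ≤ s := div_sub_specRad_le_sum_sum_tsum hB ht
  have hs0 : 0 < s := (div_pos ht0 (sub_pos.2 ht)).trans_le hs
  set f := s⁻¹ • ((fun _ => 1) ᵥ* N)
  have hf : ∀ j, f j = s⁻¹ * ∑ i, N i j := fun j => by simp [f, vecMul, dotProduct]
  have hf_mem : f ∈ stdSimplex ℝ S := by
    refine ⟨fun j => hf j ▸ mul_nonneg (inv_nonneg.2 hs0.le)
      (Finset.sum_nonneg fun i _ => hNnn i j), ?_⟩
    simp only [hf, ← Finset.mul_sum]
    rw [Finset.sum_comm, inv_mul_cancel₀ hs0.ne']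
  have hfx : f ᵥ* (1 - t⁻¹ • B) = s⁻¹ • fun _ => 1 := by
    rw [smul_vecMul, vecMul_vecMul, hN, vecMul_one]
  have hfB : f ᵥ* (ρ • 1 - B) = (t * s⁻¹) • (fun _ => 1) - (t - ρ) • f := by
    have : ρ • (1 : Matrix S S ℝ) - B = t • (1 - t⁻¹ • B) - (t - ρ) • 1 := by
      rw [smul_sub, smul_smul, mul_inv_cancel₀ ht0.ne', one_smul, sub_smul]; abel
    rw [this, vecMul_sub, vecMul_smul, hfx, vecMul_smul, vecMul_one, smul_smul]
  refine ⟨f, hf_mem, (pi_norm_le_iff_of_nonneg (sub_nonneg.2 ht.le)).2 fun j => ?_⟩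
  have hfj1 : f j ≤ 1 := hf_mem.2 ▸ Finset.single_le_sum (fun i _ => hf_mem.1 i) (Finset.mem_univ j)
  have hts : t * s⁻¹ ≤ t - ρ := by
    rw [← div_eq_mul_inv, div_le_iff₀ hs0]; rw [div_le_iff₀ (sub_pos.2 ht)] at hs; linarith
  rw [hfB, Real.norm_eq_abs, abs_le]
  simp only [Pi.sub_apply, Pi.smul_apply, smul_eq_mul, mul_one]
  constructor <;> nlinarith [hf_mem.1 j, mul_nonneg ht0.le (inv_nonneg.2 hs0.le)]


theorem exists_mem_stdSimplex_vecMul_eq_specRad_smul [Nonempty S] {B : Matrix S S ℝ}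
    (hB : ∀ i j, 0 ≤ B i j) : ∃ f ∈ stdSimplex ℝ S, f ᵥ* B = specRad B • f := by
  set ρ := specRad B
  have hφ : Continuous fun g : S → ℝ => ‖g ᵥ* (ρ • 1 - B)‖ :=
    (continuous_id.matrix_vecMul continuous_const).norm
  obtain ⟨f₀, hf₀, -⟩ := exists_mem_stdSimplex_norm_vecMul_sub_le hB (lt_add_one ρ)
  obtain ⟨f, hf, hmin⟩ := (isCompact_stdSimplex ℝ S).exists_isMinOn ⟨f₀, hf₀⟩ hφ.continuousOn
  refine ⟨f, hf, ?_⟩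
  have hf_null : ‖f ᵥ* (ρ • 1 - B)‖ ≤ 0 := le_of_forall_pos_le_add fun ε hε => by
    obtain ⟨g, hg, hgε⟩ := exists_mem_stdSimplex_norm_vecMul_sub_le hB (lt_add_of_pos_right ρ hε)
    rw [zero_add]
    exact (hmin hg).trans (hgε.trans_eq (add_sub_cancel_left ρ ε))
  rw [norm_le_zero_iff, vecMul_sub, vecMul_smul, vecMul_one, sub_eq_zero] at hf_null
  exact hf_null.symm

lemma nonpos_of_le_mulVec {P : Matrix S S ℝ} (hP : ∀ i j, 0 ≤ P i j) (hρ : specRad P < 1)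
    {v : S → ℝ} (hv : v ≤ P *ᵥ v) : v ≤ 0 := by
  have hmono : Monotone (P *ᵥ ·) := fun u w huw i =>
    Finset.sum_le_sum fun j _ => mul_le_mul_of_nonneg_left (huw j) (hP i j)
  have hiter : ∀ n : ℕ, v ≤ (P ^ n) *ᵥ v := by
    intro n
    induction n with
    | zero => simp
    | succ n ih => rw [pow_succ', ← mulVec_mulVec]; exact hv.trans (hmono ih)
  have hlim : Tendsto (fun n : ℕ => (P ^ n) *ᵥ v) atTop (𝓝 0) :=
    ((continuous_id.matrix_mulVec continuous_const).tendsto' 0 0 (zero_mulVec v)).comp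
      (tendsto_pow_atTop_nhds_zero_of_specRad_lt_one hρ)
  exact ge_of_tendsto' hlim hiter

lemma dotProduct_one_sub_mulVec_one_pos {P : Matrix S S ℝ} (hP : ∀ i j, 0 ≤ P i j)
    (hP1 : ∀ i, (P *ᵥ fun _ => (1 : ℝ)) i ≤ 1) (hρ : specRad P < 1) {f : S → ℝ}
    (hf : ∀ i, 0 ≤ f i) (hf0 : f ≠ 0) (hsupp : ∀ i j, 0 < f i → f j = 0 → P i j = 0) :
    0 < f ⬝ᵥ ((1 - P) *ᵥ fun _ => (1 : ℝ)) := by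
  set p := (1 - P) *ᵥ fun _ => (1 : ℝ)
  have hp : ∀ i, p i = 1 - (P *ᵥ fun _ => (1 : ℝ)) i := fun i => by simp [p, sub_mulVec]
  have hp0 : ∀ i, 0 ≤ p i := fun i => (hp i).symm ▸ sub_nonneg.2 (hP1 i)
  refine (dotProduct_nonneg_of_nonneg hf hp0).lt_of_ne' fun hfp => ?_
  have hfp_zero : ∀ i, f i * p i = 0 := fun i => (Finset.sum_eq_zero_iff_of_nonneg fun i _ =>
    mul_nonneg (hf i) (hp0 i)).1 hfp i (Finset.mem_univ i)
  set v : S → ℝ := fun i => if 0 < f i then 1 else 0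
  have hv : v ≤ P *ᵥ v := by
    intro i
    by_cases hi : 0 < f i
    · have hPv : (P *ᵥ v) i = (P *ᵥ fun _ => (1 : ℝ)) i := Finset.sum_congr rfl fun j _ => by
        by_cases hj : 0 < f j
        · simp [v, hj]
        · simp [v, hj, hsupp i j hi (le_antisymm (not_lt.1 hj) (hf j))]
      have hpi : p i = 0 := (mul_eq_zero.1 (hfp_zero i)).resolve_left hi.ne'
      rw [hPv]; simp only [v, hi, if_true]; linarith [hp i]
    · simp only [v, hi, if_false]
      exact Finset.sum_nonneg fun j _ => mul_nonneg (hP i j) (by positivity)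
  obtain ⟨i, hfi⟩ := Function.ne_iff.1 hf0
  have hi : 0 < f i := (hf i).lt_of_ne' hfi
  exact absurd (nonpos_of_le_mulVec hP hρ hv i) (by simp [v, hi])

end Matrix

theorem stmt5_general {S : Type*} [Fintype S] [DecidableEq S] [Nonempty S]
    (P B : Matrix S S ℝ) (b : S → ℝ) (cl : ℝ)
    (hPnn : ∀ s s', 0 ≤ P s s')
    (hP1 : ∀ s, (P *ᵥ fun _ => (1 : ℝ)) s ≤ 1)
    (hcl : 0 < cl)
    (hBnn : ∀ s s', 0 ≤ B s s')
    (hBl : ∀ s s', cl * P s s' ≤ B s s')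
    (hbl : ∀ s, cl * ((((1 : Matrix S S ℝ) - P) *ᵥ fun _ => (1 : ℝ)) s) ≤ b s)
    (hρP : specRad P < 1) :
    ∃ f : S → ℝ, (∀ s, 0 ≤ f s) ∧ f ≠ 0 ∧ f ᵥ* B = specRad B • f ∧ 0 < f ⬝ᵥ b := by
  obtain ⟨f, ⟨hf, hf_sum⟩, hfB⟩ := exists_mem_stdSimplex_vecMul_eq_specRad_smul hBnn
  have hf0 : f ≠ 0 := fun h => by simp [h] at hf_sum
  refine ⟨f, hf, hf0, hfB, ?_⟩
  have hsupp : ∀ i j, 0 < f i → f j = 0 → P i j = 0 := fun i j hi hj =>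
    le_antisymm (by nlinarith [hBl i j, apply_eq_zero_of_vecMul_eq_smul hBnn hf hfB hi hj])
      (hPnn i j)
  calc 0 < cl * (f ⬝ᵥ ((1 - P) *ᵥ fun _ => (1 : ℝ))) :=
        mul_pos hcl (dotProduct_one_sub_mulVec_one_pos hPnn hP1 hρP hf hf0 hsupp)
    _ = f ⬝ᵥ (cl • ((1 - P) *ᵥ fun _ => (1 : ℝ))) := (dotProduct_smul cl _ _).symm
    _ ≤ f ⬝ᵥ b := dotProduct_le_dotProduct_of_nonneg_left hbl hf

theorem stmt5 {S : Type*} [Fintype S] [DecidableEq S] [Nonempty S]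
    (P B : Matrix S S ℝ) (b : S → ℝ) (cl cu : ℝ)
    (hPnn : ∀ s s', 0 ≤ P s s')
    (hP1 : ∀ s, (P *ᵥ fun _ => (1 : ℝ)) s ≤ 1)
    (hcl : 0 < cl) (hclcu : cl ≤ cu)
    (hBnn : ∀ s s', 0 ≤ B s s')
    (hBl : ∀ s s', cl * P s s' ≤ B s s')
    (hBu : ∀ s s', B s s' ≤ cu * P s s')
    (hbl : ∀ s, cl * ((((1 : Matrix S S ℝ) - P) *ᵥ fun _ => (1 : ℝ)) s) ≤ b s)
    (hbu : ∀ s, b s ≤ cu * ((((1 : Matrix S S ℝ) - P) *ᵥ fun _ => (1 : ℝ)) s))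
    (hρP : specRad P < 1) :
    ∃ f : S → ℝ, (∀ s, 0 ≤ f s) ∧ f ≠ 0 ∧ f ᵥ* B = specRad B • f ∧ 0 < f ⬝ᵥ b :=
  stmt5_general P B b cl hPnn hP1 hcl hBnn hBl hbl hρP
end

section
/- For every η ∈ ℝ^S with η ≥ 0 and every t ∈ ℕ: ηᵀ B^t b = 0 if and only if ηᵀ P^t p = 0. -/
open Matrix Filter

theorem stmt6 {S : Type*} [Fintype S] [DecidableEq S] [Nonempty S]
    (P B : Matrix S S ℝ) (b : S → ℝ) (cl cu : ℝ)
    (hPnn : ∀ s s', 0 ≤ P s s')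
    (hP1 : ∀ s, (P *ᵥ fun _ => (1 : ℝ)) s ≤ 1)
    (hcl : 0 < cl) (hclcu : cl ≤ cu)
    (hBnn : ∀ s s', 0 ≤ B s s')
    (hBl : ∀ s s', cl * P s s' ≤ B s s')
    (hBu : ∀ s s', B s s' ≤ cu * P s s')
    (hbl : ∀ s, cl * ((((1 : Matrix S S ℝ) - P) *ᵥ fun _ => (1 : ℝ)) s) ≤ b s)
    (hbu : ∀ s, b s ≤ cu * ((((1 : Matrix S S ℝ) - P) *ᵥ fun _ => (1 : ℝ)) s)) :
    ∀ η : S → ℝ, (∀ s, 0 ≤ η s) → ∀ t : ℕ,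
      (η ⬝ᵥ ((B ^ t) *ᵥ b) = 0 ↔
        η ⬝ᵥ ((P ^ t) *ᵥ (((1 : Matrix S S ℝ) - P) *ᵥ fun _ => (1 : ℝ))) = 0) := by
  set p : S → ℝ := (((1 : Matrix S S ℝ) - P) *ᵥ fun _ => (1 : ℝ)) with hp
  have hpnn : ∀ s, 0 ≤ p s := by
    intro s
    have := hP1 s
    simp only [hp, sub_mulVec, one_mulVec, Pi.sub_apply]
    linarith
  clear_value p
  have hPpow : ∀ t s s', 0 ≤ (P ^ t) s s' := by
    intro t
    induction t with
    | zero =>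
      intro s s'
      simp only [pow_zero, Matrix.one_apply]
      split <;> norm_num
    | succ n ih =>
      intro s s'
      rw [pow_succ, Matrix.mul_apply]
      exact Finset.sum_nonneg fun k _ => mul_nonneg (ih s k) (hPnn k s')
  have hcu : 0 < cu := lt_of_lt_of_le hcl hclcu
  have hPtp : ∀ t s, 0 ≤ ((P ^ t) *ᵥ p) s := by
    intro t s
    exact Finset.sum_nonneg fun k _ => mul_nonneg (hPpow t s k) (hpnn k)
  have key : ∀ t s, cl ^ (t + 1) * (((P ^ t) *ᵥ p) s) ≤ ((B ^ t) *ᵥ b) s ∧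
      ((B ^ t) *ᵥ b) s ≤ cu ^ (t + 1) * (((P ^ t) *ᵥ p) s) := by
    intro t
    induction t with
    | zero =>
      intro s
      simp only [pow_zero, one_mulVec, zero_add, pow_one]
      exact ⟨hbl s, hbu s⟩
    | succ n ih =>
      intro s
      have hB : ((B ^ (n + 1)) *ᵥ b) = B *ᵥ ((B ^ n) *ᵥ b) := by
        rw [Matrix.mulVec_mulVec, ← pow_succ']
      have hP : ((P ^ (n + 1)) *ᵥ p) = P *ᵥ ((P ^ n) *ᵥ p) := by
        rw [Matrix.mulVec_mulVec, ← pow_succ']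
      rw [hB, hP]
      constructor
      · have hsum : ∀ k, cl ^ (n + 2) * (P s k * ((P ^ n) *ᵥ p) k) ≤ B s k * ((B ^ n) *ᵥ b) k := by
          intro k
          have h1 : cl * P s k * (cl ^ (n + 1) * ((P ^ n) *ᵥ p) k) ≤ B s k * ((B ^ n) *ᵥ b) k := by
            apply mul_le_mul (hBl s k) (ih k).1
            · exact mul_nonneg (pow_nonneg hcl.le _) (hPtp n k)
            · exact hBnn s k
          calc cl ^ (n + 2) * (P s k * ((P ^ n) *ᵥ p) k)
              = cl * P s k * (cl ^ (n + 1) * ((P ^ n) *ᵥ p) k) := by ring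
            _ ≤ _ := h1
        calc cl ^ (n + 1 + 1) * ((P *ᵥ ((P ^ n) *ᵥ p)) s)
            = ∑ k, cl ^ (n + 2) * (P s k * ((P ^ n) *ᵥ p) k) := by
              rw [Matrix.mulVec, dotProduct, Finset.mul_sum]
          _ ≤ ∑ k, B s k * ((B ^ n) *ᵥ b) k := Finset.sum_le_sum fun k _ => hsum k
          _ = (B *ᵥ ((B ^ n) *ᵥ b)) s := rfl
      · have hsum : ∀ k, B s k * ((B ^ n) *ᵥ b) k ≤ cu ^ (n + 2) * (P s k * ((P ^ n) *ᵥ p) k) := by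
          intro k
          have h1 : B s k * ((B ^ n) *ᵥ b) k ≤ cu * P s k * (cu ^ (n + 1) * ((P ^ n) *ᵥ p) k) := by
            apply mul_le_mul (hBu s k) (ih k).2
            · have := (ih k).1
              have : 0 ≤ cl ^ (n + 1) * ((P ^ n) *ᵥ p) k :=
                mul_nonneg (pow_nonneg hcl.le _) (hPtp n k)
              linarith [(ih k).1]
            · exact mul_nonneg hcu.le (hPnn s k)
          calc B s k * ((B ^ n) *ᵥ b) k ≤ cu * P s k * (cu ^ (n + 1) * ((P ^ n) *ᵥ p) k) := h1
            _ = cu ^ (n + 2) * (P s k * ((P ^ n) *ᵥ p) k) := by ring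
        calc (B *ᵥ ((B ^ n) *ᵥ b)) s
            = ∑ k, B s k * ((B ^ n) *ᵥ b) k := rfl
          _ ≤ ∑ k, cu ^ (n + 2) * (P s k * ((P ^ n) *ᵥ p) k) :=
              Finset.sum_le_sum fun k _ => hsum k
          _ = cu ^ (n + 1 + 1) * ((P *ᵥ ((P ^ n) *ᵥ p)) s) := by
              rw [Matrix.mulVec, dotProduct, Finset.mul_sum]
  intro η hη t
  have hX : 0 ≤ η ⬝ᵥ ((P ^ t) *ᵥ p) :=
    Finset.sum_nonneg fun k _ => mul_nonneg (hη k) (hPtp t k)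
  have hlow : cl ^ (t + 1) * (η ⬝ᵥ ((P ^ t) *ᵥ p)) ≤ η ⬝ᵥ ((B ^ t) *ᵥ b) := by
    simp only [dotProduct, Finset.mul_sum]
    apply Finset.sum_le_sum
    intro k _
    calc cl ^ (t + 1) * (η k * ((P ^ t) *ᵥ p) k)
        = η k * (cl ^ (t + 1) * ((P ^ t) *ᵥ p) k) := by ring
      _ ≤ η k * ((B ^ t) *ᵥ b) k := mul_le_mul_of_nonneg_left (key t k).1 (hη k)
  have hupp : η ⬝ᵥ ((B ^ t) *ᵥ b) ≤ cu ^ (t + 1) * (η ⬝ᵥ ((P ^ t) *ᵥ p)) := by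
    simp only [dotProduct, Finset.mul_sum]
    apply Finset.sum_le_sum
    intro k _
    calc η k * ((B ^ t) *ᵥ b) k
        ≤ η k * (cu ^ (t + 1) * ((P ^ t) *ᵥ p) k) := mul_le_mul_of_nonneg_left (key t k).2 (hη k)
      _ = cu ^ (t + 1) * (η k * ((P ^ t) *ᵥ p) k) := by ring
  have hclp : 0 < cl ^ (t + 1) := pow_pos hcl _
  constructor
  · intro h
    rw [h] at hlow
    nlinarith
  · intro h
    rw [h] at hlow hupp
    nlinarith
end

section
/- Let ι be a nonempty finite set, p : ι → ℝ with p_i ≥ 0 for all i and ∑_{i∈ι} p_i = 1, and x : ι → ℝ. Then the function β ↦ −β^{−1}·log(∑_{i∈ι} p_i·exp(−β·x_i)) is non-increasing on (0,∞): for all 0 < β₁ ≤ β₂, −β₂^{−1}·log(∑_i p_i·exp(−β₂·x_i)) ≤ −β₁^{−1}·log(∑_i p_i·exp(−β₁·x_i)). -/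
/-!
With `y = -x` and `0 < a ≤ b`, Jensen's inequality for the convex map `z ↦ z ^ (b / a)` at the
points `exp (a y)` gives `(∑ p exp (a y)) ^ (b / a) ≤ ∑ p exp (b y)`; taking logarithms and
dividing by `b` shows that `a⁻¹ log ∑ p exp (a y)` increases with `a`.
-/

open Real Finset

theorem sum_mul_pos_of_sum_eq_one {ι : Type*} {s : Finset ι} {w f : ι → ℝ}
    (hw : ∀ i ∈ s, 0 ≤ w i) (hw₁ : ∑ i ∈ s, w i = 1) (hf : ∀ i ∈ s, 0 < f i) :
    0 < ∑ i ∈ s, w i * f i := by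
  obtain ⟨j, hjs, hj⟩ : ∃ j ∈ s, (0 : ℝ) < w j :=
    exists_lt_of_sum_lt (by simp [hw₁])
  exact sum_pos' (fun i hi => mul_nonneg (hw i hi) (hf i hi).le)
    ⟨j, hjs, mul_pos hj (hf j hjs)⟩

theorem inv_mul_log_sum_mul_exp_mul_le {ι : Type*} {s : Finset ι} {w : ι → ℝ}
    (hw : ∀ i ∈ s, 0 ≤ w i) (hw₁ : ∑ i ∈ s, w i = 1) (y : ι → ℝ) {a b : ℝ}
    (ha : 0 < a) (hab : a ≤ b) :
    a⁻¹ * log (∑ i ∈ s, w i * exp (a * y i)) ≤ b⁻¹ * log (∑ i ∈ s, w i * exp (b * y i)) := by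
  have hb : 0 < b := ha.trans_le hab
  have hpos : 0 < ∑ i ∈ s, w i * exp (a * y i) :=
    sum_mul_pos_of_sum_eq_one hw hw₁ fun i _ => exp_pos _
  have jensen : (∑ i ∈ s, w i * exp (a * y i)) ^ (b / a) ≤ ∑ i ∈ s, w i * exp (b * y i) := by
    have hexp : ∀ i, exp (a * y i) ^ (b / a) = exp (b * y i) := fun i => by
      rw [← exp_mul]; field_simp
    simpa only [hexp] using rpow_arith_mean_le_arith_mean_rpow s w (fun i => exp (a * y i))
      hw hw₁ (fun i _ => (exp_pos _).le) ((one_le_div ha).2 hab)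
  have hlog := log_le_log (rpow_pos_of_pos hpos _) jensen
  rw [log_rpow hpos] at hlog
  calc a⁻¹ * log (∑ i ∈ s, w i * exp (a * y i))
      = b⁻¹ * (b / a * log (∑ i ∈ s, w i * exp (a * y i))) := by field_simp
    _ ≤ b⁻¹ * log (∑ i ∈ s, w i * exp (b * y i)) := by gcongr

theorem stmt12_general {ι : Type*} [Fintype ι]
    (p : ι → ℝ) (hp : ∀ i, 0 ≤ p i) (hps : ∑ i, p i = 1) (x : ι → ℝ) :
    ∀ β₁ β₂ : ℝ, 0 < β₁ → β₁ ≤ β₂ →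
      -β₂⁻¹ * Real.log (∑ i, p i * Real.exp (-β₂ * x i))
        ≤ -β₁⁻¹ * Real.log (∑ i, p i * Real.exp (-β₁ * x i)) := by
  intro β₁ β₂ hβ₁ h12
  have h := inv_mul_log_sum_mul_exp_mul_le (fun i _ => hp i) hps (fun i => -x i) hβ₁ h12
  simp only [← neg_mul_comm] at h
  linarith

theorem stmt12 {ι : Type*} [Fintype ι] [Nonempty ι]
    (p : ι → ℝ) (hp : ∀ i, 0 ≤ p i) (hps : ∑ i, p i = 1) (x : ι → ℝ) :
    ∀ β₁ β₂ : ℝ, 0 < β₁ → β₁ ≤ β₂ →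
      -β₂⁻¹ * Real.log (∑ i, p i * Real.exp (-β₂ * x i))
        ≤ -β₁⁻¹ * Real.log (∑ i, p i * Real.exp (-β₁ * x i)) :=
  stmt12_general p hp hps x
end

section
/- Let f : [0,∞) → ℝ be non-increasing, α ∈ (0,1), and δ > 0. Let 0 < β₀ < β₁ < ⋯ < β_K be real numbers with β_K = −log(α)/δ and (β_{k+1}^{−1} − β_k^{−1})·log(α) ≤ δ for every k < K, and set B := {β₀, β₁, …, β_K}. Then max_{β∈B} (f(β) + β^{−1}·log(α)) ≤ sup_{β>0} (f(β) + β^{−1}·log(α)) ≤ max_{β∈B} (f(β) + β^{−1}·log(α)) + max{f(0) − f(β₀), δ}. -/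
/-!
Write `g b = f b + b⁻¹ * log α`. Each grid value is a value of `g`, which gives the lower bound.
For the upper bound, a point `b > 0` lies below `β₀`, between two consecutive grid points
`βₖ ≤ b ≤ βₖ₊₁`, or beyond `β_K`. Since `f` is non-increasing and `b ↦ b⁻¹ * log α` is
non-decreasing, `g b ≤ f (βₖ) + βₖ₊₁⁻¹ * log α`, i.e. `g b` exceeds `g (βₖ)` by at most the gap
`(βₖ₊₁⁻¹ - βₖ⁻¹) * log α ≤ δ`. The two ends are the same estimate with `f 0` in place of `f (βₖ)`
(costing `f 0 - f β₀`) and with `βₖ₊₁ = ∞` (costing `-β_K⁻¹ * log α = δ`).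
-/

open Set

theorem exists_mem_Ico_castSucc_succ {α : Type*} [LinearOrder α] :
    ∀ {n : ℕ} (x : Fin (n + 1) → α) {b : α}, x 0 ≤ b → b < x (Fin.last n) →
      ∃ k : Fin n, b ∈ Ico (x k.castSucc) (x k.succ)
  | 0, _, _, h0, hlast => absurd hlast (not_lt.2 h0)
  | n + 1, x, b, h0, hlast => by
    rcases lt_or_ge b (x 1) with h1 | h1
    · exact ⟨0, h0, h1⟩
    · obtain ⟨k, hk⟩ :=
        exists_mem_Ico_castSucc_succ (fun i => x i.succ) h1 (by rwa [← Fin.succ_last] at hlast)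
      exact ⟨k.succ, by simpa only [Fin.succ_castSucc] using hk⟩

section

variable {f : ℝ → ℝ} {c : ℝ}

theorem add_inv_mul_le_of_le (hf : AntitoneOn f (Ici 0)) (hc : c ≤ 0) {a b : ℝ}
    (ha : 0 ≤ a) (hab : a ≤ b) : f b + b⁻¹ * c ≤ f a := by
  have hfb : f b ≤ f a := hf ha (ha.trans hab) hab
  have hcb : b⁻¹ * c ≤ 0 := mul_nonpos_of_nonneg_of_nonpos (inv_nonneg.2 (ha.trans hab)) hc
  linarith

theorem add_inv_mul_le_of_le_of_le (hf : AntitoneOn f (Ici 0)) (hc : c ≤ 0) {a b a' : ℝ}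
    (ha : 0 ≤ a) (hab : a ≤ b) (hb : 0 < b) (hba' : b ≤ a') :
    f b + b⁻¹ * c ≤ f a + a'⁻¹ * c := by
  have hfb : f b ≤ f a := hf ha (ha.trans hab) hab
  have hcb : b⁻¹ * c ≤ a'⁻¹ * c := mul_le_mul_of_nonpos_right (inv_anti₀ hb hba') hc
  linarith

theorem bddAbove_add_inv_mul_image (hf : AntitoneOn f (Ici 0)) (hc : c ≤ 0) :
    BddAbove ((fun b => f b + b⁻¹ * c) '' Ioi 0) := by
  refine ⟨f 0, ?_⟩
  rintro _ ⟨b, hb, rfl⟩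
  exact add_inv_mul_le_of_le hf hc le_rfl (le_of_lt hb)

variable {K : ℕ} {β : Fin (K + 1) → ℝ} {δ : ℝ}

theorem sup'_add_inv_mul_le_csSup (hf : AntitoneOn f (Ici 0)) (hc : c ≤ 0) (hpos : ∀ k, 0 < β k) :
    Finset.univ.sup' Finset.univ_nonempty (fun k => f (β k) + (β k)⁻¹ * c)
      ≤ sSup ((fun b => f b + b⁻¹ * c) '' Ioi 0) :=
  Finset.sup'_le _ _ fun k _ => le_csSup (bddAbove_add_inv_mul_image hf hc) ⟨β k, hpos k, rfl⟩

theorem add_inv_mul_le_sup'_add (hf : AntitoneOn f (Ici 0)) (hc : c ≤ 0) (hpos : 0 < β 0)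
    (hmono : Monotone β) (hlast : -(β (Fin.last K))⁻¹ * c ≤ δ)
    (hgap : ∀ k : Fin K, ((β k.succ)⁻¹ - (β k.castSucc)⁻¹) * c ≤ δ) {b : ℝ} (hb : 0 < b) :
    f b + b⁻¹ * c ≤ Finset.univ.sup' Finset.univ_nonempty (fun k => f (β k) + (β k)⁻¹ * c)
      + max (f 0 - f (β 0)) δ := by
  set M := Finset.univ.sup' Finset.univ_nonempty (fun k => f (β k) + (β k)⁻¹ * c)
  have hM : ∀ k, f (β k) + (β k)⁻¹ * c ≤ M := fun k =>
    Finset.le_sup' (fun k => f (β k) + (β k)⁻¹ * c) (Finset.mem_univ k)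
  have hβ : ∀ k, 0 ≤ β k := fun k => hpos.le.trans (hmono (Fin.zero_le k))
  have hleft := le_max_left (f 0 - f (β 0)) δ
  have hright := le_max_right (f 0 - f (β 0)) δ
  rcases le_or_gt b (β 0) with hb0 | hb0
  · have := add_inv_mul_le_of_le_of_le hf hc le_rfl hb.le hb hb0
    linarith [hM 0]
  rcases le_or_gt (β (Fin.last K)) b with hbK | hbK
  · have := add_inv_mul_le_of_le hf hc (hβ _) hbK
    linarith [hM (Fin.last K)]
  obtain ⟨k, hkb, hbk⟩ := exists_mem_Ico_castSucc_succ β hb0.le hbK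
  have := add_inv_mul_le_of_le_of_le hf hc (hβ _) hkb hb hbk.le
  linarith [hM k.castSucc, hgap k]

theorem csSup_add_inv_mul_le_sup'_add (hf : AntitoneOn f (Ici 0)) (hc : c ≤ 0) (hpos : 0 < β 0)
    (hmono : Monotone β) (hlast : -(β (Fin.last K))⁻¹ * c ≤ δ)
    (hgap : ∀ k : Fin K, ((β k.succ)⁻¹ - (β k.castSucc)⁻¹) * c ≤ δ) :
    sSup ((fun b => f b + b⁻¹ * c) '' Ioi 0)
      ≤ Finset.univ.sup' Finset.univ_nonempty (fun k => f (β k) + (β k)⁻¹ * c)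
        + max (f 0 - f (β 0)) δ := by
  refine csSup_le ((nonempty_Ioi (a := (0 : ℝ))).image _) ?_
  rintro _ ⟨b, hb, rfl⟩
  exact add_inv_mul_le_sup'_add hf hc hpos hmono hlast hgap hb

end

theorem stmt17_general (f : ℝ → ℝ) (hf : ∀ x y : ℝ, 0 ≤ x → x ≤ y → f y ≤ f x)
    (α δ : ℝ) (hα : α ∈ Set.Ioo (0 : ℝ) 1)
    (K : ℕ) (β : Fin (K + 1) → ℝ)
    (hpos : 0 < β 0) (hmono : StrictMono β)
    (hlast : β (Fin.last K) = -Real.log α / δ)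
    (hgap : ∀ k : Fin K, ((β k.succ)⁻¹ - (β k.castSucc)⁻¹) * Real.log α ≤ δ) :
    Finset.univ.sup' Finset.univ_nonempty (fun k => f (β k) + (β k)⁻¹ * Real.log α)
        ≤ sSup ((fun b : ℝ => f b + b⁻¹ * Real.log α) '' Set.Ioi 0) ∧
    sSup ((fun b : ℝ => f b + b⁻¹ * Real.log α) '' Set.Ioi 0)
        ≤ Finset.univ.sup' Finset.univ_nonempty (fun k => f (β k) + (β k)⁻¹ * Real.log α)
          + max (f 0 - f (β 0)) δ := by
  have hlog : Real.log α < 0 := Real.log_neg hα.1 hα.2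
  have hf' : AntitoneOn f (Ici 0) := fun x hx y _ hxy => hf x y hx hxy
  have hlast' : -(β (Fin.last K))⁻¹ * Real.log α = δ := by
    rw [hlast, inv_div, div_neg, neg_mul, neg_mul, neg_neg, div_mul_cancel₀ δ hlog.ne]
  exact ⟨sup'_add_inv_mul_le_csSup hf' hlog.le
      fun k => hpos.trans_le (hmono.monotone (Fin.zero_le k)),
    csSup_add_inv_mul_le_sup'_add hf' hlog.le hpos hmono.monotone hlast'.le hgap⟩

theorem stmt17 (f : ℝ → ℝ) (hf : ∀ x y : ℝ, 0 ≤ x → x ≤ y → f y ≤ f x)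
    (α δ : ℝ) (hα : α ∈ Set.Ioo (0 : ℝ) 1) (hδ : 0 < δ)
    (K : ℕ) (β : Fin (K + 1) → ℝ)
    (hpos : 0 < β 0) (hmono : StrictMono β)
    (hlast : β (Fin.last K) = -Real.log α / δ)
    (hgap : ∀ k : Fin K, ((β k.succ)⁻¹ - (β k.castSucc)⁻¹) * Real.log α ≤ δ) :
    Finset.univ.sup' Finset.univ_nonempty (fun k => f (β k) + (β k)⁻¹ * Real.log α)
        ≤ sSup ((fun b : ℝ => f b + b⁻¹ * Real.log α) '' Set.Ioi 0) ∧
    sSup ((fun b : ℝ => f b + b⁻¹ * Real.log α) '' Set.Ioi 0)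
        ≤ Finset.univ.sup' Finset.univ_nonempty (fun k => f (β k) + (β k)⁻¹ * Real.log α)
          + max (f 0 - f (β 0)) δ :=
  stmt17_general f hf α δ hα K β hpos hmono hlast hgap
end

section
/- Let α ∈ (0,1) and ε ∈ [α, 1). Define v : ℕ → ℝ by v(0) = 0 and v(t+1) = −1 + inf{ q₁·v(t) : q₁ ≥ 0, q₂ ≥ 0, q₁ + q₂ = 1, q₁ ≤ ε/α, q₂ ≤ (1−ε)/α }. Then the constraint set is nonempty, v(t) ≤ −t for every t ∈ ℕ, and consequently v(t) → −∞ as t → ∞. (This is the dynamic-programming recursion for the nested CVaR total reward in a one-state transient MDP with per-step reward −1, continuation probability ε, and CVaR risk level α; it shows the nested-CVaR total reward criterion can be unbounded in a transient MDP.) -/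
open Filter

theorem stmt18 (α ε : ℝ) (hα : α ∈ Set.Ioo (0 : ℝ) 1) (hε : ε ∈ Set.Ico α 1)
    (v : ℕ → ℝ) (hv0 : v 0 = 0)
    (hvsucc : ∀ t : ℕ,
      v (t + 1) = -1 + sInf {x : ℝ | ∃ q₁ q₂ : ℝ, 0 ≤ q₁ ∧ 0 ≤ q₂ ∧ q₁ + q₂ = 1 ∧
        q₁ ≤ ε / α ∧ q₂ ≤ (1 - ε) / α ∧ x = q₁ * v t}) :
    (∀ t : ℕ, {x : ℝ | ∃ q₁ q₂ : ℝ, 0 ≤ q₁ ∧ 0 ≤ q₂ ∧ q₁ + q₂ = 1 ∧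
        q₁ ≤ ε / α ∧ q₂ ≤ (1 - ε) / α ∧ x = q₁ * v t}.Nonempty) ∧
    (∀ t : ℕ, v t ≤ -(t : ℝ)) ∧
    Filter.Tendsto v Filter.atTop Filter.atBot := by
  obtain ⟨hα0, hα1⟩ := hα
  obtain ⟨hεα, hε1⟩ := hε
  have hmem : ∀ t : ℕ, v t ∈ {x : ℝ | ∃ q₁ q₂ : ℝ, 0 ≤ q₁ ∧ 0 ≤ q₂ ∧ q₁ + q₂ = 1 ∧
      q₁ ≤ ε / α ∧ q₂ ≤ (1 - ε) / α ∧ x = q₁ * v t} := by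
    intro t
    refine ⟨1, 0, by norm_num, le_refl 0, by ring, ?_, ?_, by ring⟩
    · rw [le_div_iff₀ hα0]; linarith
    · apply div_nonneg <;> linarith
  have hbdd : ∀ t : ℕ, BddBelow {x : ℝ | ∃ q₁ q₂ : ℝ, 0 ≤ q₁ ∧ 0 ≤ q₂ ∧ q₁ + q₂ = 1 ∧
      q₁ ≤ ε / α ∧ q₂ ≤ (1 - ε) / α ∧ x = q₁ * v t} := by
    intro t
    refine ⟨-|v t|, ?_⟩
    rintro x ⟨q₁, q₂, hq1, hq2, hsum, _, _, rfl⟩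
    have hq1le : q₁ ≤ 1 := by linarith
    calc -|v t| ≤ q₁ * (-|v t|) := by nlinarith [abs_nonneg (v t)]
      _ ≤ q₁ * v t := by
          have := neg_abs_le (v t)
          nlinarith
  have hle : ∀ t : ℕ, v t ≤ -(t : ℝ) := by
    intro t
    induction t with
    | zero => simp [hv0]
    | succ n ih =>
      have h := hvsucc n
      have h2 : sInf {x : ℝ | ∃ q₁ q₂ : ℝ, 0 ≤ q₁ ∧ 0 ≤ q₂ ∧ q₁ + q₂ = 1 ∧
          q₁ ≤ ε / α ∧ q₂ ≤ (1 - ε) / α ∧ x = q₁ * v n} ≤ v n :=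
        csInf_le (hbdd n) (hmem n)
      push_cast
      linarith
  refine ⟨fun t => ⟨v t, hmem t⟩, hle, ?_⟩
  apply tendsto_atBot_mono hle
  exact tendsto_neg_atBot_iff.mpr tendsto_natCast_atTop_atTop
end
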